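/- arXiv:1806.07866 — 3 statements merged into one kernel-verified Lean document; each statement's English description precedes it below -/
import Mathlib

section
/- Let {f_n} be a Schauder basis of a complex separable Hilbert space H with basis constant M = sup_n ||Q_n|| where Q_n is the n-th natural (partial sum) projection. Then for any two distinct indices k, l, the angle θ_{kl} = arccos(|⟨f_k, f_l⟩| / (||f_k||·||f_l||)) satisfies θ_{kl} ≥ arccos(1 - 1/(8M²)). In particular, the angles between any two basis vectors are bounded below by a positive constant. -/
/-!
If `k < l`, the natural projection `Q_{k+1}` sends `u + t • v` to `u`, where `u`, `v` are the
normalised vectors `f k`, `f l` and `t` is any scalar. Hence `1 ≤ M * ‖u + t • v‖` for every `t`,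
and choosing `t` unimodular with `t * ⟪u, v⟫ = -|⟪u, v⟫|` gives `‖u + t • v‖² = 2 - 2 |⟪u, v⟫|`.
So `|⟪u, v⟫| ≤ 1 - 1 / (2 M²)`, and `M ≥ 1` lets `2 M²` be weakened to `8 M²`.
-/

open Filter Topology

/-- `f` is a Schauder basis of `H`: every `x` has a unique norm-convergent expansion. -/
def IsSchauderBasis {H : Type*} [NormedAddCommGroup H] [InnerProductSpace ℂ H]
    (f : ℕ → H) : Prop :=
  ∀ x : H, ∃! a : ℕ → ℂ,
    Tendsto (fun k => ∑ n ∈ Finset.range k, a n • f n) atTop (𝓝 x)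

/-- `M` bounds the norms of all natural (partial sum) projections of the basis `f`. -/
def IsBasisConstant {H : Type*} [NormedAddCommGroup H] [InnerProductSpace ℂ H]
    (f : ℕ → H) (M : ℝ) : Prop :=
  ∀ (x : H) (a : ℕ → ℂ),
    Tendsto (fun k => ∑ n ∈ Finset.range k, a n • f n) atTop (𝓝 x) →
    ∀ k, ‖∑ n ∈ Finset.range k, a n • f n‖ ≤ M * ‖x‖

section InnerProduct

variable {𝕜 E : Type*} [RCLike 𝕜] [NormedAddCommGroup E] [InnerProductSpace 𝕜 E]

theorem exists_norm_eq_one_norm_add_smul_sq (u v : E) :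
    ∃ t : 𝕜, ‖t‖ = 1 ∧ ‖u + t • v‖ ^ 2 = ‖u‖ ^ 2 + ‖v‖ ^ 2 - 2 * ‖(inner 𝕜 u v : 𝕜)‖ := by
  obtain ⟨c, hc, hcg⟩ := RCLike.exists_norm_eq_mul_self (inner 𝕜 u v : 𝕜)
  refine ⟨-c, by rw [norm_neg, hc], ?_⟩
  have hre : RCLike.re (inner 𝕜 u ((-c) • v) : 𝕜) = -‖(inner 𝕜 u v : 𝕜)‖ := by
    rw [inner_smul_right, neg_mul, ← hcg, map_neg, RCLike.ofReal_re]
  rw [norm_add_sq (𝕜 := 𝕜), hre, norm_smul, norm_neg, hc, one_mul]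
  ring

end InnerProduct

section SchauderBasis

variable {H : Type*} [NormedAddCommGroup H] [InnerProductSpace ℂ H] {f : ℕ → H}

theorem IsSchauderBasis.ne_zero (hbasis : IsSchauderBasis f) (n : ℕ) : f n ≠ 0 := by
  intro hn
  have hzero : ∀ a : ℕ → ℂ, (∀ m ≠ n, a m = 0) →
      Tendsto (fun k => ∑ m ∈ Finset.range k, a m • f m) atTop (𝓝 0) := by
    intro a ha
    refine tendsto_const_nhds.congr fun k => (Finset.sum_eq_zero fun m _ => ?_).symm
    by_cases hm : m = n
    · rw [hm, hn, smul_zero]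
    · rw [ha m hm, zero_smul]
  obtain ⟨a, -, huniq⟩ := hbasis 0
  have hsingle := huniq (Pi.single n 1) (hzero _ fun m hm => Pi.single_eq_of_ne hm _)
  have hzero' := huniq 0 (hzero 0 fun _ _ => rfl)
  simpa using congrFun (hsingle.trans hzero'.symm) n

theorem sum_range_ite_smul_add_ite_smul (k l j : ℕ) (c₁ c₂ : ℂ) :
    ∑ n ∈ Finset.range j, ((if n = k then c₁ else 0) + (if n = l then c₂ else 0)) • f n =
      (if k ∈ Finset.range j then c₁ • f k else 0) +
        (if l ∈ Finset.range j then c₂ • f l else 0) := by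
  simp only [add_smul, Finset.sum_add_distrib, ite_smul, zero_smul]
  rw [Finset.sum_ite_eq', Finset.sum_ite_eq']

theorem IsBasisConstant.norm_smul_le {M : ℝ} (hM : IsBasisConstant f M) {k l : ℕ} (hkl : k < l)
    (c₁ c₂ : ℂ) : ‖c₁ • f k‖ ≤ M * ‖c₁ • f k + c₂ • f l‖ := by
  have hexpansion : Tendsto (fun j => ∑ n ∈ Finset.range j,
      ((if n = k then c₁ else 0) + (if n = l then c₂ else 0)) • f n)
      atTop (𝓝 (c₁ • f k + c₂ • f l)) := by
    refine tendsto_atTop_of_eventually_const (i₀ := l + 1) fun j hj => ?_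
    rw [sum_range_ite_smul_add_ite_smul, if_pos (by simp; omega), if_pos (by simp; omega)]
  have hproj := hM _ _ hexpansion (k + 1)
  rwa [sum_range_ite_smul_add_ite_smul, if_pos (by simp), if_neg (by simp; omega),
    add_zero] at hproj

theorem IsBasisConstant.one_le {M : ℝ} (hM : IsBasisConstant f M) {k : ℕ} (hk : f k ≠ 0) :
    1 ≤ M := by
  have := hM.norm_smul_le (Nat.lt_succ_self k) 1 0
  rw [one_smul, zero_smul, add_zero] at this
  exact (le_mul_iff_one_le_left (norm_pos_iff.2 hk)).1 this

theorem IsBasisConstant.norm_inner_div_le {M : ℝ} (hM : IsBasisConstant f M) {k l : ℕ}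
    (hkl : k < l) (hfk : f k ≠ 0) (hfl : f l ≠ 0) :
    ‖(inner ℂ (f k) (f l) : ℂ)‖ / (‖f k‖ * ‖f l‖) ≤ 1 - 1 / (2 * M ^ 2) := by
  have hk : ‖f k‖ ≠ 0 := norm_ne_zero_iff.2 hfk
  have hl : ‖f l‖ ≠ 0 := norm_ne_zero_iff.2 hfl
  set u := ((‖f k‖⁻¹ : ℝ) : ℂ) • f k
  set v := ((‖f l‖⁻¹ : ℝ) : ℂ) • f l
  have hu : ‖u‖ = 1 := by simp [u, norm_smul, hk]
  have hv : ‖v‖ = 1 := by simp [v, norm_smul, hl]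
  have huv : ‖(inner ℂ u v : ℂ)‖ = ‖(inner ℂ (f k) (f l) : ℂ)‖ / (‖f k‖ * ‖f l‖) := by
    simp only [u, v, inner_smul_left, inner_smul_right, Complex.conj_ofReal, norm_mul,
      Complex.norm_real, norm_inv, norm_norm]
    field_simp
  obtain ⟨t, -, hnorm⟩ := exists_norm_eq_one_norm_add_smul_sq (𝕜 := ℂ) u v
  have hproj : 1 ≤ M * ‖u + t • v‖ := by
    have := hM.norm_smul_le hkl ((‖f k‖⁻¹ : ℝ) : ℂ) (t * ((‖f l‖⁻¹ : ℝ) : ℂ))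
    rw [mul_smul] at this
    change ‖u‖ ≤ M * ‖u + t • v‖ at this
    rwa [hu] at this
  rw [hu, hv, huv] at hnorm
  have hsq : 1 ≤ M ^ 2 * ‖u + t • v‖ ^ 2 := by
    nlinarith [norm_nonneg (u + t • v)]
  rw [hnorm] at hsq
  have hM2 : 0 < M ^ 2 := by nlinarith [hM.one_le hfk]
  have hgap : 1 / (2 * M ^ 2) ≤ 1 - ‖(inner ℂ (f k) (f l) : ℂ)‖ / (‖f k‖ * ‖f l‖) := by
    rw [div_le_iff₀ (by positivity)]
    linarith
  linarith

end SchauderBasis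

theorem angle_lower_bound_general {H : Type*} [NormedAddCommGroup H] [InnerProductSpace ℂ H]
    (f : ℕ → H) (M : ℝ)
    (hbasis : IsSchauderBasis f) (hM : IsBasisConstant f M)
    (k l : ℕ) (hkl : k ≠ l) :
    Real.arccos (‖(inner ℂ (f k) (f l) : ℂ)‖ / (‖f k‖ * ‖f l‖)) ≥
      Real.arccos (1 - 1 / (8 * M ^ 2)) := by
  have hcos : ‖(inner ℂ (f k) (f l) : ℂ)‖ / (‖f k‖ * ‖f l‖) ≤ 1 - 1 / (2 * M ^ 2) := by
    rcases hkl.lt_or_gt with hlt | hgt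
    · exact hM.norm_inner_div_le hlt (hbasis.ne_zero k) (hbasis.ne_zero l)
    · rw [norm_inner_symm, mul_comm]
      exact hM.norm_inner_div_le hgt (hbasis.ne_zero l) (hbasis.ne_zero k)
  have hweaken : 1 - 1 / (2 * M ^ 2) ≤ 1 - 1 / (8 * M ^ 2) := by
    have hM1 := hM.one_le (hbasis.ne_zero k)
    gcongr 1 - 1 / ?_
    nlinarith
  exact Real.arccos_le_arccos (hcos.trans hweaken)

theorem angle_lower_bound {H : Type*} [NormedAddCommGroup H] [InnerProductSpace ℂ H]
    [CompleteSpace H] (f : ℕ → H) (M : ℝ)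
    (hbasis : IsSchauderBasis f) (hM : IsBasisConstant f M)
    (k l : ℕ) (hkl : k ≠ l) :
    Real.arccos (‖(inner ℂ (f k) (f l) : ℂ)‖ / (‖f k‖ * ‖f l‖)) ≥
      Real.arccos (1 - 1 / (8 * M ^ 2)) :=
  angle_lower_bound_general f M hbasis hM k l hkl
end

section
/- Let {f_n} be a normalized Schauder basis of a Hilbert space H (||f_n|| = 1 for all n) with basis constant M. Then for all distinct k, l, |⟨f_k, f_l⟩| ≤ 1 - 1/(8M²). -/
open Filter Topology

/-!
Rotate `f l` by a unimodular scalar `θ` so that `⟪f k, θ • f l⟫ = |⟪f k, f l⟫|`. For `k < l`, the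
partial-sum projection onto the first `k + 1` coordinates sends `f k - θ • f l` to `f k`, so
`1 ≤ M ‖f k - θ • f l‖ = M √(2 - 2 |⟪f k, f l⟫|)`. This even gives the bound `1 - 1 / (2 M²)`.
-/

section InnerProductSpace

variable {H : Type*} [NormedAddCommGroup H] [InnerProductSpace ℂ H]

theorem exists_norm_eq_one_norm_sub_smul_sq (u v : H) :
    ∃ θ : ℂ, ‖θ‖ = 1 ∧ ‖u - θ • v‖ ^ 2 = ‖u‖ ^ 2 - 2 * ‖inner ℂ u v‖ + ‖v‖ ^ 2 := by
  obtain ⟨θ, hθ, hθuv⟩ := RCLike.exists_norm_eq_mul_self (inner ℂ u v)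
  refine ⟨θ, hθ, ?_⟩
  rw [@norm_sub_sq ℂ, inner_smul_right, ← hθuv, norm_smul, hθ, one_mul, RCLike.ofReal_re]

end InnerProductSpace

namespace IsBasisConstant

variable {H : Type*} [NormedAddCommGroup H] [InnerProductSpace ℂ H] {f : ℕ → H} {M : ℝ}

theorem norm_sum_range_le_of_eq_zero (hM : IsBasisConstant f M) {a : ℕ → ℂ} {N : ℕ}
    (ha : ∀ n, N ≤ n → a n = 0) (k : ℕ) :
    ‖∑ n ∈ Finset.range k, a n • f n‖ ≤ M * ‖∑ n ∈ Finset.range N, a n • f n‖ := by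
  refine hM _ a (tendsto_atTop_of_eventually_const (i₀ := N) fun m hm => ?_) k
  refine (Finset.sum_subset (Finset.range_subset_range.2 hm) fun n _ hn => ?_).symm
  rw [ha n (by simpa using hn), zero_smul]

theorem norm_le_mul_norm_sub_smul (hM : IsBasisConstant f M) {k l : ℕ} (hkl : k < l) (θ : ℂ) :
    ‖f k‖ ≤ M * ‖f k - θ • f l‖ := by
  have hsum : ∀ N, ∑ n ∈ Finset.range N, (Pi.single k 1 - Pi.single l θ : ℕ → ℂ) n • f n
      = (if k < N then f k else 0) - if l < N then θ • f l else 0 := by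
    intro N
    simp [sub_smul, Finset.sum_sub_distrib, Pi.single_apply, ite_smul]
  have := hM.norm_sum_range_le_of_eq_zero (a := Pi.single k 1 - Pi.single l θ) (N := l + 1)
    (fun n hn => by simp [show n ≠ k by omega, show n ≠ l by omega]) (k + 1)
  rwa [hsum, hsum, if_pos k.lt_succ_self, if_neg (by omega), if_pos (hkl.trans l.lt_succ_self),
    if_pos l.lt_succ_self, sub_zero] at this

theorem norm_inner_le_of_lt (hM : IsBasisConstant f M) {k l : ℕ} (hk : ‖f k‖ = 1)
    (hl : ‖f l‖ = 1) (hkl : k < l) : ‖inner ℂ (f k) (f l)‖ ≤ 1 - 1 / (2 * M ^ 2) := by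
  obtain ⟨θ, -, hθ⟩ := exists_norm_eq_one_norm_sub_smul_sq (f k) (f l)
  rw [hk, hl] at hθ
  have hproj := hM.norm_le_mul_norm_sub_smul hkl θ
  rw [hk] at hproj
  have hsq : 1 ≤ M ^ 2 * (2 - 2 * ‖inner ℂ (f k) (f l)‖) := by
    calc (1 : ℝ) ≤ (M * ‖f k - θ • f l‖) ^ 2 := one_le_pow₀ hproj
      _ = M ^ 2 * (2 - 2 * ‖inner ℂ (f k) (f l)‖) := by rw [mul_pow, hθ]; ring
  have hM0 : M ≠ 0 := by
    rintro rfl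
    norm_num at hsq
  rw [le_sub_comm, div_le_iff₀ (by positivity)]
  linarith

end IsBasisConstant

theorem inner_le_of_schauder_basis_general {H : Type*} [NormedAddCommGroup H]
    [InnerProductSpace ℂ H] (f : ℕ → H) (M : ℝ)
    (hM : IsBasisConstant f M)
    (hnorm : ∀ n, ‖f n‖ = 1)
    (k l : ℕ) (hkl : k ≠ l) :
    ‖(inner ℂ (f k) (f l) : ℂ)‖ ≤ 1 - 1 / (8 * M ^ 2) := by
  have hsharp : ‖(inner ℂ (f k) (f l) : ℂ)‖ ≤ 1 - 1 / (2 * M ^ 2) := by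
    rcases hkl.lt_or_gt with hlt | hgt
    · exact hM.norm_inner_le_of_lt (hnorm k) (hnorm l) hlt
    · rw [norm_inner_symm]
      exact hM.norm_inner_le_of_lt (hnorm l) (hnorm k) hgt
  have hconst : 1 / (8 * M ^ 2) ≤ 1 / (2 * M ^ 2) := by
    rw [show 1 / (8 * M ^ 2) = 1 / (2 * M ^ 2) / 4 by ring]
    exact div_le_self (by positivity) (by norm_num)
  linarith

theorem inner_le_of_schauder_basis {H : Type*} [NormedAddCommGroup H]
    [InnerProductSpace ℂ H] [CompleteSpace H] (f : ℕ → H) (M : ℝ)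
    (hbasis : IsSchauderBasis f) (hM : IsBasisConstant f M)
    (hnorm : ∀ n, ‖f n‖ = 1)
    (k l : ℕ) (hkl : k ≠ l) :
    ‖(inner ℂ (f k) (f l) : ℂ)‖ ≤ 1 - 1 / (8 * M ^ 2) :=
  inner_le_of_schauder_basis_general f M hM hnorm k l hkl
end

section
/- Let ν be a probability measure on the unit circle concentrated on a countable set. If 1 and z^b (b a positive integer) are both unit vectors in L²(T, ν), then the angle between them satisfies cos θ_b = |∫ z^b dν| / ||z^b||_{L²(ν)}, and sup_{b≥1} cos θ_b = 1 when the support is infinite; hence the family {z^m}_{m∈Z} in L²(T, ν) does not have angles between distinct members bounded below by a positive constant. -/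
/-!
The point `(z)_{z ∈ s}` of the compact metrizable group `Circle ^ s` is recurrent: along a
subsequence `n_k` its powers tend to `1`, i.e. `z ^ n_k → 1` pointwise on `s`. Since `ν` lives on
`s`, dominated convergence gives `∫ z ^ n_k dν → 1`, and as every `z ^ m` is a unit vector of
`L²(ν)`, the angle between `z ^ n_k` and `1 = z ^ 0` tends to `0`.
-/

open MeasureTheory Filter Topology
open scoped ENNReal ComplexConjugate

theorem exists_tendsto_pow_nhds_one {G : Type*} [Group G] [TopologicalSpace G]
    [IsTopologicalGroup G] [CompactSpace G] [FirstCountableTopology G] (g : G) :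
    ∃ n : ℕ → ℕ, (∀ k, 0 < n k) ∧ Tendsto (fun k => g ^ n k) atTop (𝓝 1) := by
  obtain ⟨x, -, φ, hφ, hlim⟩ := isCompact_univ.tendsto_subseq (x := fun k => g ^ k)
    (fun _ => Set.mem_univ _)
  refine ⟨fun k => φ (k + 1) - φ k, fun k => Nat.sub_pos_of_lt (hφ k.lt_succ_self), ?_⟩
  have hpow : ∀ k, g ^ (φ (k + 1) - φ k) = g ^ φ (k + 1) * (g ^ φ k)⁻¹ :=
    fun k => pow_sub g (hφ k.lt_succ_self).le
  simp only [hpow]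
  simpa using (hlim.comp (tendsto_add_atTop_nat 1)).mul hlim.inv

theorem MeasureTheory.Lp.norm_eq_one_of_ae_norm_eq_one {α E : Type*} [MeasurableSpace α]
    {μ : Measure α} [IsProbabilityMeasure μ] [NormedAddCommGroup E] {p : ℝ≥0∞} (hp : p ≠ 0)
    (f : Lp E p μ) (hf : ∀ᵐ x ∂μ, ‖f x‖ = 1) : ‖f‖ = 1 := by
  have : eLpNorm f p μ = eLpNorm (fun _ => (1 : ℝ)) p μ :=
    eLpNorm_congr_norm_ae (hf.mono fun x hx => by simp [hx])
  rw [Lp.norm_def, this, eLpNorm_const _ hp (NeZero.ne μ)]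
  simp

theorem MeasureTheory.L2.inner_eq_integral_of_ae_eq {α 𝕜 : Type*} [MeasurableSpace α]
    {μ : Measure α} [RCLike 𝕜] {f g : Lp 𝕜 2 μ} {u v : α → 𝕜} (hf : f =ᵐ[μ] u)
    (hg : g =ᵐ[μ] v) : inner 𝕜 f g = ∫ x, conj (u x) * v x ∂μ := by
  rw [L2.inner_def]
  refine integral_congr_ae ?_
  filter_upwards [hf, hg] with x hfx hgx
  rw [RCLike.inner_apply', hfx, hgx]

theorem exists_tendsto_pow_one_of_countable {s : Set ℂ} (hs : s.Countable)
    (hunit : s ⊆ {z | ‖z‖ = 1}) :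
    ∃ n : ℕ → ℕ, (∀ k, 0 < n k) ∧ ∀ z ∈ s, Tendsto (fun k => z ^ n k) atTop (𝓝 1) := by
  have := hs.to_subtype
  let g : s → Circle := fun z => ⟨z, mem_sphere_zero_iff_norm.2 (hunit z.2)⟩
  obtain ⟨n, hn, hlim⟩ := exists_tendsto_pow_nhds_one g
  exact ⟨n, hn, fun z hz => (continuous_subtype_val.tendsto _).comp (hlim.apply_nhds ⟨z, hz⟩)⟩

theorem exists_tendsto_integral_pow_one (ν : Measure ℂ) [IsProbabilityMeasure ν] {s : Set ℂ}
    (hs : s.Countable) (hunit : s ⊆ {z | ‖z‖ = 1}) (hνs : ν sᶜ = 0) :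
    ∃ n : ℕ → ℕ, (∀ k, 0 < n k) ∧ Tendsto (fun k => ∫ z, z ^ n k ∂ν) atTop (𝓝 1) := by
  obtain ⟨n, hn, hlim⟩ := exists_tendsto_pow_one_of_countable hs hunit
  have hae : ∀ᵐ z ∂ν, z ∈ s := mem_ae_iff.2 hνs
  have hbound : ∀ k, ∀ᵐ z ∂ν, ‖z ^ n k‖ ≤ 1 := fun k =>
    hae.mono fun z hz => by rw [norm_pow, hunit hz, one_pow]
  refine ⟨n, hn, ?_⟩
  simpa using tendsto_integral_of_dominated_convergence (fun _ => 1)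
    (fun k => (continuous_pow (n k)).aestronglyMeasurable) (integrable_const 1) hbound
    (hae.mono hlim)

theorem zpow_family_angles_not_bounded_below_general (ν : Measure ℂ) [IsProbabilityMeasure ν]
    (hdiscrete : ∃ s : Set ℂ, s.Countable ∧ s ⊆ {z : ℂ | ‖z‖ = 1} ∧ ν sᶜ = 0)
    (F : ℤ → Lp ℂ 2 ν) (hF : ∀ m, ⇑(F m) =ᵐ[ν] fun z : ℂ => z ^ m) :
    (∀ b : ℕ, 0 < b →
        ‖(inner ℂ (F b) (F 0) : ℂ)‖ / (‖F b‖ * ‖F 0‖) = ‖∫ z, z ^ b ∂ν‖ / ‖F b‖) ∧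
    (∀ ε : ℝ, 0 < ε → ∃ b : ℕ, 0 < b ∧ ‖∫ z, z ^ b ∂ν‖ > 1 - ε) ∧
    ∀ ε : ℝ, 0 < ε → ∃ m m' : ℤ, m ≠ m' ∧
      Real.arccos (‖(inner ℂ (F m) (F m') : ℂ)‖ / (‖F m‖ * ‖F m'‖)) < ε := by
  obtain ⟨s, hs, hunit, hνs⟩ := hdiscrete
  have hnorm : ∀ m, ‖F m‖ = 1 := fun m => Lp.norm_eq_one_of_ae_norm_eq_one two_ne_zero _ <| by
    filter_upwards [hF m, mem_ae_iff.2 hνs] with z hz hzs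
    rw [hz, norm_zpow, hunit hzs, one_zpow]
  have hinner : ∀ b : ℕ, ‖(inner ℂ (F b) (F 0) : ℂ)‖ = ‖∫ z, z ^ b ∂ν‖ := fun b => by
    rw [L2.inner_eq_integral_of_ae_eq (hF b) (hF 0)]
    simp only [zpow_zero, mul_one, zpow_natCast, integral_conj, RCLike.norm_conj]
  have hcos : ∀ b : ℕ, ‖(inner ℂ (F b) (F 0) : ℂ)‖ / (‖F b‖ * ‖F 0‖) = ‖∫ z, z ^ b ∂ν‖ := by
    simp [hinner, hnorm]
  obtain ⟨n, hn, hlim⟩ := exists_tendsto_integral_pow_one ν hs hunit hνs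
  have hlim_norm : Tendsto (fun k => ‖∫ z, z ^ n k ∂ν‖) atTop (𝓝 1) := by simpa using hlim.norm
  refine ⟨fun b _ => by rw [hinner, hnorm 0, mul_one], fun ε hε => ?_, fun ε hε => ?_⟩
  · obtain ⟨k, hk⟩ := (hlim_norm.eventually (lt_mem_nhds (sub_lt_self 1 hε))).exists
    exact ⟨n k, hn k, hk⟩
  · have harccos : Tendsto (fun k => Real.arccos ‖∫ z, z ^ n k ∂ν‖) atTop (𝓝 0) := by
      simpa [Function.comp_def] using (Real.continuous_arccos.tendsto 1).comp hlim_norm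
    obtain ⟨k, hk⟩ := (harccos.eventually (gt_mem_nhds hε)).exists
    exact ⟨n k, 0, by exact_mod_cast (hn k).ne', by rwa [hcos]⟩

/-- For a discrete probability measure on the circle with infinite support, the family
`{z^m}_{m ∈ ℤ}` in `L²(ν)` does not have angles between distinct members bounded below:
the moments `|∫ z^b dν|` come arbitrarily close to `1`, and for every `ε > 0` there are
distinct `m, m'` whose angle is less than `ε`. -/
theorem zpow_family_angles_not_bounded_below (ν : Measure ℂ) [IsProbabilityMeasure ν]
    (hdiscrete : ∃ s : Set ℂ, s.Countable ∧ s ⊆ {z : ℂ | ‖z‖ = 1} ∧ ν sᶜ = 0)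
    (hinf : {z : ℂ | ν {z} ≠ 0}.Infinite)
    (F : ℤ → Lp ℂ 2 ν) (hF : ∀ m, ⇑(F m) =ᵐ[ν] fun z : ℂ => z ^ m) :
    (∀ b : ℕ, 0 < b →
        ‖(inner ℂ (F b) (F 0) : ℂ)‖ / (‖F b‖ * ‖F 0‖) = ‖∫ z, z ^ b ∂ν‖ / ‖F b‖) ∧
    (∀ ε : ℝ, 0 < ε → ∃ b : ℕ, 0 < b ∧ ‖∫ z, z ^ b ∂ν‖ > 1 - ε) ∧
    ∀ ε : ℝ, 0 < ε → ∃ m m' : ℤ, m ≠ m' ∧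
      Real.arccos (‖(inner ℂ (F m) (F m') : ℂ)‖ / (‖F m‖ * ‖F m'‖)) < ε :=
  zpow_family_angles_not_bounded_below_general ν hdiscrete F hF
end
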